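/- arXiv:0912.2161 — 2 statements merged into one kernel-verified Lean document; each statement's English description precedes it below -/
import Mathlib

section
/- Let μ = (μ_1 ≥ … ≥ μ_n > 0) be a partition of N and let a be a word of length N with letters in {1,2,3,…}. Write a = a_{[1]}a_{[2]}⋯a_{[n]}, where a_{[i]} is the i-th consecutive block of a of length μ_i, and set μ_{n+1} = 0 with a_{[n+1]} the empty word. For words u, v of the same length m, writing w = uv (a word of length 2m), define Inv_{(m,m)}(u,v) = Σ_{k=1}^{m} Σ_{i=k+1}^{k+m−1} χ(w_k < w_i), where χ(true)=1 and χ(false)=0; for m ≥ m' and v of length m', define Inv_{(m,m')}(u,v) = Inv_{(m,m)}(u, 1^{m−m'}v), where 1^{m−m'}v is v prefixed by m−m' letters 1. Then |Inv_μ(a)| = Σ_{i=1}^{n} Inv_{(μ_i,μ_{i+1})}(a_{[i]}, a_{[i+1]}). -/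
/-!
STATEMENT 0: For a partition μ of N and a word a of length N, the inversion
statistic |Inv_μ(a)| of the tabloid of shape μ with reading word a equals
Σ_{i=1}^{n} Inv_{(μ_i,μ_{i+1})}(a_{[i]}, a_{[i+1]}).
-/

/-- `i`-th part of `μ` (1-based); `0` if `i` is out of range. -/
def KMpart (μ : List ℕ) (i : ℕ) : ℕ := μ.getD (i - 1) 0

/-- Sum of the first `i` parts of `μ`. -/
def KMpsum (μ : List ℕ) (i : ℕ) : ℕ := (μ.take i).sum

/-- Entry `t_{i,j}` (1-based) of the tabloid of shape `μ` with reading word `a`: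
the `i`-th consecutive block of `a` of length `μ_i` fills row `i` from right to left. -/
def KMentry (μ a : List ℕ) (i j : ℕ) : ℕ := a.getD (KMpsum μ (i - 1) + KMpart μ i - j) 0

/-- The set of cells `(i,j)` (1-based) of the Young diagram of `μ`. -/
def KMcells (μ : List ℕ) : Finset (ℕ × ℕ) :=
  (Finset.Icc 1 μ.length ×ˢ Finset.Icc 1 μ.sum).filter (fun c => c.2 ≤ KMpart μ c.1)

/-- `|Inv_μ(a)|`: the number of pairs of a cell `(i,j)` together with a cell `(k,l)`
in its attacking region (i.e. `(i,k)` with `k < j` or `(i+1,k)` with `k > j`)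
such that `t_{k,l} > t_{i,j}`. -/
def KMInvNum (μ a : List ℕ) : ℕ :=
  ((KMcells μ ×ˢ KMcells μ).filter (fun cd =>
    ((cd.2.1 = cd.1.1 ∧ cd.2.2 < cd.1.2) ∨ (cd.2.1 = cd.1.1 + 1 ∧ cd.1.2 < cd.2.2)) ∧
      KMentry μ a cd.1.1 cd.1.2 < KMentry μ a cd.2.1 cd.2.2)).card

/-- The `i`-th consecutive block `a_{[i]}` of `a` of length `μ_i`. -/
def KMblock (μ a : List ℕ) (i : ℕ) : List ℕ := (a.drop (KMpsum μ (i - 1))).take (KMpart μ i)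

/-- `Inv_{(m,m)}(u,v)` for words `u`, `v` of the same length `m`:
with `w = uv`, it is `Σ_{k=1}^{m} Σ_{i=k+1}^{k+m-1} χ(w_k < w_i)`. -/
def KMInvEq (u v : List ℕ) : ℕ :=
  ∑ k ∈ Finset.Icc 1 u.length, ∑ i ∈ Finset.Icc (k + 1) (k + u.length - 1),
    (if (u ++ v).getD (k - 1) 0 < (u ++ v).getD (i - 1) 0 then 1 else 0)

/-- `Inv_{(m,m')}(u,v)` for `u` of length `m` and `v` of length `m' ≤ m`:
`Inv_{(m,m)}(u, 1^{m-m'} v)`. -/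
def KMInvPair (u v : List ℕ) : ℕ :=
  KMInvEq u (List.replicate (u.length - v.length) 1 ++ v)

/-!
Number the cells of rows `i` and `i + 1` by their positions in the word
`w = a_{[i]} 1^{μ_i - μ_{i+1}} a_{[i+1]}`: cell `(i, j)` sits at position `μ_i + 1 - j` and cell
`(i + 1, l)` at `2 μ_i + 1 - l` (this uses `μ_{i+1} ≤ μ_i`). A cell of row `i` at position `k`
then attacks exactly the cells at positions `k + 1, …, k + μ_i - 1`, so the inversions whose first
cell lies in row `i` are the pairs counted by `Inv_{(μ_i,μ_i)}` in `w`, except for pairs whose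
second position is a padding letter `1`; these never count, since every letter is at least `1`.
Summing over the rows gives the theorem.
-/

open Finset

lemma KMpsum_succ (μ : List ℕ) (i : ℕ) : KMpsum μ (i + 1) = KMpsum μ i + KMpart μ (i + 1) := by
  rw [KMpsum, KMpsum, KMpart, List.take_add_one, List.sum_append, Nat.add_sub_cancel,
    List.getD_eq_getElem?_getD]
  cases μ[i]? <;> simp

lemma KMpsum_le_sum (μ : List ℕ) (i : ℕ) : KMpsum μ i ≤ μ.sum :=
  (List.take_sublist i μ).sum_le_sum fun _ _ => Nat.zero_le _

lemma KMpart_le_sum (μ : List ℕ) (i : ℕ) : KMpart μ i ≤ μ.sum := by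
  rw [KMpart, List.getD_eq_getElem?_getD]
  cases h : μ[i - 1]? with
  | none => exact Nat.zero_le _
  | some x => exact List.le_sum_of_mem (List.mem_of_getElem? h)

lemma KMpart_eq_zero {μ : List ℕ} {i : ℕ} (hi : μ.length < i) : KMpart μ i = 0 := by
  rw [KMpart, List.getD_eq_getElem?_getD, List.getElem?_eq_none (by omega)]
  rfl

lemma KMpart_succ_le {μ : List ℕ} (hsort : μ.Pairwise (· ≥ ·)) {i : ℕ} (hi : 1 ≤ i) :
    KMpart μ (i + 1) ≤ KMpart μ i := by
  rcases le_or_gt μ.length i with h | h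
  · simp [KMpart_eq_zero (Nat.lt_succ_of_le h)]
  · rw [KMpart, KMpart, List.getD_eq_getElem _ _ (by omega), List.getD_eq_getElem _ _ (by omega)]
    exact List.pairwise_iff_getElem.mp hsort _ _ _ _ (by omega)

lemma mem_KMcells {μ : List ℕ} {c : ℕ × ℕ} :
    c ∈ KMcells μ ↔ (1 ≤ c.1 ∧ c.1 ≤ μ.length) ∧ 1 ≤ c.2 ∧ c.2 ≤ KMpart μ c.1 := by
  have := KMpart_le_sum μ c.1
  simp only [KMcells, mem_filter, mem_product, mem_Icc]
  omega

lemma length_KMblock {μ a : List ℕ} (hlen : a.length = μ.sum) {i : ℕ} (hi : 1 ≤ i) :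
    (KMblock μ a i).length = KMpart μ i := by
  obtain ⟨r, rfl⟩ := Nat.exists_eq_add_of_le' hi
  have := KMpsum_le_sum μ (r + 1)
  rw [KMpsum_succ] at this
  simp only [KMblock, List.length_take, List.length_drop, Nat.add_sub_cancel]
  omega

lemma KMentry_eq_getD_KMblock (μ a : List ℕ) {i j : ℕ} (hj : 1 ≤ j) (hj' : j ≤ KMpart μ i) :
    KMentry μ a i j = (KMblock μ a i).getD (KMpart μ i - j) 0 := by
  rw [KMentry, KMblock, List.getD_eq_getElem?_getD, List.getD_eq_getElem?_getD,
    List.getElem?_take_of_lt (by omega), List.getElem?_drop, Nat.add_sub_assoc hj']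

lemma pos_of_mem_KMblock {μ a : List ℕ} (hletters : ∀ x ∈ a, 0 < x) {i : ℕ} :
    ∀ x ∈ KMblock μ a i, 0 < x :=
  fun x hx => hletters x (List.mem_of_mem_drop (List.mem_of_mem_take hx))

def rowPairWord (u v : List ℕ) : List ℕ := u ++ (List.replicate (u.length - v.length) 1 ++ v)

section RowPairWord

variable (u v : List ℕ) {p : ℕ}

lemma getD_rowPairWord_of_lt (hp : p < u.length) : (rowPairWord u v).getD p 0 = u.getD p 0 :=
  List.getD_append _ _ _ _ hp

lemma getD_rowPairWord_of_pad (hp : u.length ≤ p) (hp' : p < 2 * u.length - v.length) :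
    (rowPairWord u v).getD p 0 = 1 := by
  rw [rowPairWord, List.getD_append_right _ _ _ _ hp,
    List.getD_append _ _ _ _ (by rw [List.length_replicate]; omega)]
  exact List.getD_replicate 1 (by omega)

lemma getD_rowPairWord_of_le_length (hv : v.length ≤ u.length) {l : ℕ} (hl : 1 ≤ l)
    (hl' : l ≤ v.length) :
    (rowPairWord u v).getD (2 * u.length - l) 0 = v.getD (v.length - l) 0 := by
  rw [rowPairWord, List.getD_append_right _ _ _ _ (by omega),
    List.getD_append_right _ _ _ _ (by rw [List.length_replicate]; omega), List.length_replicate]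
  congr 1
  omega

end RowPairWord

def windowInvPairs (m : ℕ) (w : List ℕ) : Finset (Σ _ : ℕ, ℕ) :=
  ((Icc 1 m).sigma fun k => Icc (k + 1) (k + m - 1)).filter
    fun p => w.getD (p.1 - 1) 0 < w.getD (p.2 - 1) 0

lemma KMInvEq_eq_card (u v : List ℕ) : KMInvEq u v = #(windowInvPairs u.length (u ++ v)) := by
  rw [windowInvPairs, card_filter, sum_sigma]
  rfl

lemma KMInvPair_eq_card (u v : List ℕ) :
    KMInvPair u v = #(windowInvPairs u.length (rowPairWord u v)) :=
  KMInvEq_eq_card _ _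

lemma mem_windowInvPairs {m : ℕ} {w : List ℕ} {p : Σ _ : ℕ, ℕ} :
    p ∈ windowInvPairs m w ↔ (1 ≤ p.1 ∧ p.1 ≤ m) ∧ (p.1 < p.2 ∧ p.2 < p.1 + m) ∧
      w.getD (p.1 - 1) 0 < w.getD (p.2 - 1) 0 := by
  simp only [windowInvPairs, mem_filter, mem_sigma, mem_Icc]
  omega

lemma not_mem_pad_of_mem_windowInvPairs {u v : List ℕ} (hu : ∀ x ∈ u, 0 < x)
    {p : Σ _ : ℕ, ℕ} (hp : p ∈ windowInvPairs u.length (rowPairWord u v)) :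
    p.2 ≤ u.length ∨ 2 * u.length - v.length < p.2 := by
  rw [mem_windowInvPairs] at hp
  obtain ⟨hp1, -, hlt⟩ := hp
  by_contra! hpad
  rw [getD_rowPairWord_of_lt _ _ (by omega), getD_rowPairWord_of_pad _ _ (by omega) (by omega),
    List.getD_eq_getElem _ _ (by omega)] at hlt
  exact (hu _ (List.getElem_mem _)).not_ge (Nat.lt_succ_iff.mp hlt)

def KMInv (μ a : List ℕ) : Finset ((ℕ × ℕ) × (ℕ × ℕ)) :=
  (KMcells μ ×ˢ KMcells μ).filter fun cd =>
    ((cd.2.1 = cd.1.1 ∧ cd.2.2 < cd.1.2) ∨ (cd.2.1 = cd.1.1 + 1 ∧ cd.1.2 < cd.2.2)) ∧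
      KMentry μ a cd.1.1 cd.1.2 < KMentry μ a cd.2.1 cd.2.2

lemma KMInvNum_eq_card (μ a : List ℕ) : KMInvNum μ a = #(KMInv μ a) := rfl

lemma mem_KMInv {μ a : List ℕ} {c d : ℕ × ℕ} :
    (c, d) ∈ KMInv μ a ↔ c ∈ KMcells μ ∧ d ∈ KMcells μ ∧
      ((d.1 = c.1 ∧ d.2 < c.2) ∨ (d.1 = c.1 + 1 ∧ c.2 < d.2)) ∧
      KMentry μ a c.1 c.2 < KMentry μ a d.1 d.2 := by
  simp only [KMInv, mem_filter, mem_product, and_assoc]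

def rowPairPos (i m : ℕ) (c : ℕ × ℕ) : ℕ := if c.1 = i then m + 1 - c.2 else 2 * m + 1 - c.2

def rowPairCell (i m p : ℕ) : ℕ × ℕ := if p ≤ m then (i, m + 1 - p) else (i + 1, 2 * m + 1 - p)

lemma rowPairPos_rowPairCell {i m p : ℕ} (hp : 1 ≤ p) (hp' : p ≤ 2 * m) :
    rowPairPos i m (rowPairCell i m p) = p := by
  unfold rowPairCell rowPairPos
  split_ifs <;> simp_all <;> omega

lemma rowPairCell_fst (i m p : ℕ) : (rowPairCell i m p).1 = i ∨ (rowPairCell i m p).1 = i + 1 := by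
  unfold rowPairCell
  split_ifs <;> simp

section Tabloid

variable {μ a : List ℕ} {i : ℕ}

lemma rowPairCell_rowPairPos (hsort : μ.Pairwise (· ≥ ·)) (hi : 1 ≤ i) {c : ℕ × ℕ}
    (hc : c ∈ KMcells μ) (hrow : c.1 = i ∨ c.1 = i + 1) :
    rowPairCell i (KMpart μ i) (rowPairPos i (KMpart μ i) c) = c := by
  obtain ⟨-, hl, hl'⟩ := mem_KMcells.1 hc
  obtain ⟨r, l⟩ := c
  have := KMpart_succ_le hsort hi
  dsimp only at hrow hl hl'
  rcases hrow with rfl | rfl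
  · simp only [rowPairPos, rowPairCell, if_true]
    rw [if_pos (by omega)]
    exact Prod.ext rfl (by omega)
  · simp only [rowPairPos, rowPairCell, Nat.succ_ne_self, if_false]
    rw [if_neg (by omega)]
    exact Prod.ext rfl (by omega)

lemma getD_rowPairWord_rowPairPos (hsort : μ.Pairwise (· ≥ ·)) (hlen : a.length = μ.sum)
    (hi : 1 ≤ i) {c : ℕ × ℕ} (hc : c ∈ KMcells μ) (hrow : c.1 = i ∨ c.1 = i + 1) :
    (rowPairWord (KMblock μ a i) (KMblock μ a (i + 1))).getD
      (rowPairPos i (KMpart μ i) c - 1) 0 = KMentry μ a c.1 c.2 := by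
  obtain ⟨-, hl, hl'⟩ := mem_KMcells.1 hc
  obtain ⟨r, l⟩ := c
  have := KMpart_succ_le hsort hi
  have hu := length_KMblock hlen hi
  have hv := length_KMblock hlen (i := i + 1) (by omega)
  dsimp only at hrow hl hl' ⊢
  rcases hrow with rfl | rfl
  · rw [rowPairPos, if_pos rfl, getD_rowPairWord_of_lt _ _ (by omega),
      KMentry_eq_getD_KMblock μ a hl hl']
    congr 1
    omega
  · rw [rowPairPos, if_neg (by omega),
      show 2 * KMpart μ i + 1 - l - 1 = 2 * (KMblock μ a i).length - l by omega,
      getD_rowPairWord_of_le_length _ _ (by omega) hl (by omega),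
      KMentry_eq_getD_KMblock μ a hl hl', hv]

lemma rowPairCell_mem_KMcells {p : ℕ} (hi : 1 ≤ i) (hi' : i ≤ μ.length) (hp : 1 ≤ p)
    (hp' : p ≤ 2 * KMpart μ i) (hpad : p ≤ KMpart μ i ∨ 2 * KMpart μ i - KMpart μ (i + 1) < p) :
    rowPairCell i (KMpart μ i) p ∈ KMcells μ := by
  rw [rowPairCell, mem_KMcells]
  split_ifs with h
  · dsimp only
    omega
  · have hi'' : i + 1 ≤ μ.length := by
      by_contra! hlt
      rw [KMpart_eq_zero hlt] at hpad
      omega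
    dsimp only
    omega

lemma rowPairPos_mem_windowInvPairs (hsort : μ.Pairwise (· ≥ ·)) (hlen : a.length = μ.sum)
    (hi : 1 ≤ i) {c d : ℕ × ℕ} (hcd : (c, d) ∈ KMInv μ a) (hrow : c.1 = i) :
    (⟨rowPairPos i (KMpart μ i) c, rowPairPos i (KMpart μ i) d⟩ : Σ _ : ℕ, ℕ) ∈
      windowInvPairs (KMpart μ i) (rowPairWord (KMblock μ a i) (KMblock μ a (i + 1))) := by
  obtain ⟨hc, hd, hattack, hent⟩ := mem_KMInv.1 hcd
  have hdrow : d.1 = i ∨ d.1 = i + 1 := by omega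
  rw [mem_windowInvPairs, getD_rowPairWord_rowPairPos hsort hlen hi hc (.inl hrow),
    getD_rowPairWord_rowPairPos hsort hlen hi hd hdrow]
  refine ⟨?_, ?_, hent⟩ <;>
  · obtain ⟨-, hj, hj'⟩ := mem_KMcells.1 hc
    obtain ⟨-, hl, hl'⟩ := mem_KMcells.1 hd
    have := KMpart_succ_le hsort hi
    obtain ⟨r, j⟩ := c
    obtain ⟨s, l⟩ := d
    dsimp only at hrow hdrow hattack hj hj' hl hl' ⊢
    subst hrow
    rcases hdrow with rfl | rfl <;> simp only [rowPairPos, if_true, Nat.succ_ne_self, if_false] <;>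
      omega

lemma rowPairCell_mem_KMInv (hsort : μ.Pairwise (· ≥ ·)) (hlen : a.length = μ.sum)
    (hletters : ∀ x ∈ a, 0 < x) (hi : 1 ≤ i) (hi' : i ≤ μ.length) {p : Σ _ : ℕ, ℕ}
    (hp : p ∈ windowInvPairs (KMpart μ i) (rowPairWord (KMblock μ a i) (KMblock μ a (i + 1)))) :
    (rowPairCell i (KMpart μ i) p.1, rowPairCell i (KMpart μ i) p.2) ∈ KMInv μ a := by
  have hpad := not_mem_pad_of_mem_windowInvPairs (pos_of_mem_KMblock hletters)
    (by rwa [length_KMblock hlen hi])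
  rw [length_KMblock hlen hi, length_KMblock hlen (by omega)] at hpad
  obtain ⟨hp1, hp2, hent⟩ := mem_windowInvPairs.1 hp
  have hc := rowPairCell_mem_KMcells hi hi' hp1.1 (by omega) (.inl hp1.2)
  have hd := rowPairCell_mem_KMcells hi hi' (by omega) (by omega) hpad
  rw [← rowPairPos_rowPairCell (i := i) hp1.1 (by omega : p.1 ≤ 2 * KMpart μ i),
    ← rowPairPos_rowPairCell (i := i) (by omega : 1 ≤ p.2) (by omega : p.2 ≤ 2 * KMpart μ i),
    getD_rowPairWord_rowPairPos hsort hlen hi hc (rowPairCell_fst _ _ _),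
    getD_rowPairWord_rowPairPos hsort hlen hi hd (rowPairCell_fst _ _ _)] at hent
  refine mem_KMInv.2 ⟨hc, hd, ?_, hent⟩
  unfold rowPairCell
  split_ifs <;> dsimp only <;> omega

end Tabloid

lemma card_KMInv_row {μ a : List ℕ} (hsort : μ.Pairwise (· ≥ ·)) (hlen : a.length = μ.sum)
    (hletters : ∀ x ∈ a, 0 < x) {i : ℕ} (hi : 1 ≤ i) (hi' : i ≤ μ.length) :
    #{cd ∈ KMInv μ a | cd.1.1 = i} = KMInvPair (KMblock μ a i) (KMblock μ a (i + 1)) := by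
  rw [KMInvPair_eq_card, length_KMblock hlen hi]
  refine card_nbij' (fun cd => ⟨rowPairPos i (KMpart μ i) cd.1, rowPairPos i (KMpart μ i) cd.2⟩)
    (fun p => (rowPairCell i (KMpart μ i) p.1, rowPairCell i (KMpart μ i) p.2)) ?_ ?_ ?_ ?_
  · rintro ⟨c, d⟩ hcd
    obtain ⟨hcd, hrow⟩ := mem_filter.1 hcd
    exact rowPairPos_mem_windowInvPairs hsort hlen hi hcd hrow
  · intro p hp
    have hp1 := (mem_windowInvPairs.1 hp).1
    refine mem_filter.2 ⟨rowPairCell_mem_KMInv hsort hlen hletters hi hi' hp, ?_⟩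
    simp only [rowPairCell, if_pos hp1.2]
  · rintro ⟨c, d⟩ hcd
    obtain ⟨hcd, hrow : c.1 = i⟩ := mem_filter.1 hcd
    obtain ⟨hc, hd, hattack, -⟩ := mem_KMInv.1 hcd
    exact Prod.ext (rowPairCell_rowPairPos hsort hi hc (.inl hrow))
      (rowPairCell_rowPairPos hsort hi hd (by dsimp only; omega))
  · intro p hp
    obtain ⟨hp1, hp2, -⟩ := mem_windowInvPairs.1 hp
    exact Sigma.ext (rowPairPos_rowPairCell (by omega) (by omega))
      (heq_of_eq (rowPairPos_rowPairCell (by omega) (by omega)))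

theorem inv_eq_sum_of_row_pairs_general
    (μ : List ℕ) (hsort : List.Pairwise (· ≥ ·) μ)
    (a : List ℕ) (hlen : a.length = μ.sum) (hletters : ∀ x ∈ a, 0 < x) :
    KMInvNum μ a =
      ∑ i ∈ Finset.Icc 1 μ.length, KMInvPair (KMblock μ a i) (KMblock μ a (i + 1)) := by
  have hrows : Set.MapsTo (fun cd => cd.1.1) (KMInv μ a : Set ((ℕ × ℕ) × (ℕ × ℕ)))
      (Icc 1 μ.length) := by
    rintro ⟨c, d⟩ hcd
    exact mem_Icc.2 (mem_KMcells.1 (mem_KMInv.1 hcd).1).1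
  rw [KMInvNum_eq_card, card_eq_sum_card_fiberwise hrows]
  refine sum_congr rfl fun i hi => ?_
  exact card_KMInv_row hsort hlen hletters (mem_Icc.1 hi).1 (mem_Icc.1 hi).2

theorem inv_eq_sum_of_row_pairs
    (μ : List ℕ) (hsort : List.Pairwise (· ≥ ·) μ) (hpos : ∀ x ∈ μ, 0 < x)
    (a : List ℕ) (hlen : a.length = μ.sum) (hletters : ∀ x ∈ a, 0 < x) :
    KMInvNum μ a =
      ∑ i ∈ Finset.Icc 1 μ.length, KMInvPair (KMblock μ a i) (KMblock μ a (i + 1)) :=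
  inv_eq_sum_of_row_pairs_general μ hsort a hlen hletters
end

section
/- Let a = a_1a_2⋯a_L be a word of length L with letters in {1,…,n+1} and let â be the box-ball state obtained from a by appending infinitely many letters 1. Then τ(a) equals the total number of balls contained in the first L boxes during the first L time steps of the box-ball evolution: τ(a) = Σ_{k=0}^{L−1} #{ i : 1 ≤ i ≤ L and (T^k(â))_i ≥ 2 }. -/
/-!
STATEMENT 6: For a word a of length L with letters in {1,…,n+1}, letting â be the
box-ball state obtained by appending infinitely many 1's, the statistic
τ(a) = L·χ(a_1 ≥ 2) + Σ_{i=1}^{L−1} (L−i)·χ(a_i < a_{i+1})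
equals the total number of balls contained in the first L boxes during the first
L time steps of the box-ball evolution T.
-/

open scoped Classical

/-- One elementary move of the box-ball algorithm for balls with label `j`:
given a state `s : ℕ → ℕ` (positions `0,1,2,…`; `1` = empty box, `j ≥ 2` = ball
labeled `j`) together with the set of positions of already-moved balls, take the
leftmost not-yet-moved ball with label `j` and move it to the nearest empty box to
its right (marking its new position as moved). If there is no such ball or no such
empty box, do nothing. -/
noncomputable def bbsMoveBall (j : ℕ) (sm : (ℕ → ℕ) × Set ℕ) : (ℕ → ℕ) × Set ℕ :=
  if h : (∃ i, sm.1 i = j ∧ i ∉ sm.2) ∧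
      ∃ i', sm.1 i' = 1 ∧ sInf {i | sm.1 i = j ∧ i ∉ sm.2} < i' then
    let p := sInf {i | sm.1 i = j ∧ i ∉ sm.2}
    let q := sInf {i | sm.1 i = 1 ∧ p < i}
    (Function.update (Function.update sm.1 p 1) q j, insert q sm.2)
  else sm

/-- The phase of the box-ball time evolution moving all not-yet-moved balls of
label `j`, one at a time, each to the nearest empty box to its right. -/
noncomputable def bbsPhase (j : ℕ) (sm : (ℕ → ℕ) × Set ℕ) : (ℕ → ℕ) × Set ℕ :=
  (bbsMoveBall j)^[{i | sm.1 i = j ∧ i ∉ sm.2}.ncard] sm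

/-- The box-ball time evolution `T`: starting with no ball moved, for each label
`j = n+1, n, …, 2` in decreasing order move all balls with label `j`, one at a
time, each to the nearest empty box to its right; every ball is moved exactly once. -/
noncomputable def bbsT (n : ℕ) (s : ℕ → ℕ) : ℕ → ℕ :=
  ((List.range n).foldl (fun sm k => bbsPhase (n + 1 - k) sm) (s, (∅ : Set ℕ))).1

/-- `τ(a) = L·χ(a_1 ≥ 2) + Σ_{i=1}^{L−1} (L−i)·χ(a_i < a_{i+1})` for a word `a` of
length `L`. -/
def bbsTau (a : List ℕ) : ℕ :=
  a.length * (if 2 ≤ a.headD 0 then 1 else 0) +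
    ∑ i ∈ Finset.Icc 1 (a.length - 1),
      (a.length - i) * (if a.getD (i - 1) 0 < a.getD i 0 then 1 else 0)

/-!
One time step is the composition of carriers sweeping from left to right, one for each label
`j = n + 1, …, 2` in turn: the carrier of label `j` loads every `j`-ball it passes, leaving an
empty box, and unloads one ball into each empty box it meets while loaded. Moving the leftmost
unmoved ball to the nearest empty box on its right, one ball at a time, has the same effect.
Together the carriers act locally: an empty box receives the largest label carried, and a ball `x`
is loaded and replaced by the largest carried label below `x` (or by an empty box).

At two consecutive letters `x, y` with outputs `x', y'` this gives the conservation law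
`[x' < y'] + [2 ≤ y] = [x < y] + [2 ≤ x]`. Summed over boxes `0, …, m`, with an empty box put in
front of box `0`, it says that one time step lowers the number of ascents up to box `m` by one if
box `m` holds a ball, and leaves it unchanged otherwise. Balls only move to the right, so after `L`
steps the first `L` boxes are empty. Hence the number of ascents of `1 a` up to box `m` counts the
times box `m` is occupied during the first `L` steps, and `τ(a)` is the sum of these counts over
`m < L`.
-/

namespace BoxBall

open Function

/-- The load on arrival at box `i` of a carrier that picks up the `j`-balls outside the set `M` of
moved boxes and drops them into empty boxes; `carrierPass` is the state it leaves behind. -/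
noncomputable def carrierLoad (j : ℕ) (s : ℕ → ℕ) (M : Set ℕ) : ℕ → ℕ
  | 0 => 0
  | i + 1 =>
    if s i = j ∧ i ∉ M then carrierLoad j s M i + 1
    else if s i = 1 ∧ 0 < carrierLoad j s M i then carrierLoad j s M i - 1
    else carrierLoad j s M i

noncomputable def carrierPass (j : ℕ) (s : ℕ → ℕ) (M : Set ℕ) (i : ℕ) : ℕ :=
  if s i = j ∧ i ∉ M then 1
  else if s i = 1 ∧ 0 < carrierLoad j s M i then j
  else s i

section Carrier

variable {j : ℕ} {s : ℕ → ℕ} {M : Set ℕ}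

theorem carrierLoad_succ_of_ball {i : ℕ} (hs : s i = j) (hM : i ∉ M) :
    carrierLoad j s M (i + 1) = carrierLoad j s M i + 1 := by
  simp [carrierLoad, hs, hM]

theorem carrierLoad_succ_of_drop (hj : j ≠ 1) {i : ℕ} (hs : s i = 1)
    (hl : 0 < carrierLoad j s M i) : carrierLoad j s M (i + 1) + 1 = carrierLoad j s M i := by
  rw [carrierLoad, if_neg fun h => hj (h.1.symm.trans hs), if_pos ⟨hs, hl⟩]
  omega

theorem carrierLoad_succ_of_skip {i : ℕ} (hb : s i = j → i ∈ M)
    (hd : s i = 1 → carrierLoad j s M i = 0) :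
    carrierLoad j s M (i + 1) = carrierLoad j s M i := by
  rw [carrierLoad, if_neg fun h => h.2 (hb h.1), if_neg fun h => (hd h.1 ▸ h.2).false]

theorem carrierPass_of_ball {i : ℕ} (hs : s i = j) (hM : i ∉ M) : carrierPass j s M i = 1 := by
  simp [carrierPass, hs, hM]

theorem carrierPass_of_drop (hj : j ≠ 1) {i : ℕ} (hs : s i = 1) (hl : 0 < carrierLoad j s M i) :
    carrierPass j s M i = j := by
  simp [carrierPass, hs, hl, Ne.symm hj]

theorem carrierPass_of_skip {i : ℕ} (hb : s i = j → i ∈ M)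
    (hd : s i = 1 → carrierLoad j s M i = 0) : carrierPass j s M i = s i := by
  rw [carrierPass, if_neg fun h => h.2 (hb h.1), if_neg fun h => (hd h.1 ▸ h.2).false]

theorem carrierLoad_eq_zero_of_forall_lt {p : ℕ} (h : ∀ k < p, s k = j → k ∈ M) :
    ∀ i ≤ p, carrierLoad j s M i = 0
  | 0, _ => rfl
  | i + 1, hi => by
    have ih := carrierLoad_eq_zero_of_forall_lt h i (by omega)
    rw [carrierLoad, if_neg fun hb => hb.2 (h i (by omega) hb.1), if_neg (by omega), ih]

theorem carrierPass_eq_self (h : ∀ k, s k = j → k ∈ M) : carrierPass j s M = s := by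
  funext i
  rw [carrierPass, if_neg fun hb => hb.2 (h i hb.1),
    if_neg (by simp [carrierLoad_eq_zero_of_forall_lt (fun k _ => h k) i le_rfl])]

theorem carrierPass_eq_of_forall_mem_ne (h : ∀ i ∈ M, s i ≠ j) :
    carrierPass j s M = carrierPass j s ∅ := by
  have hball : ∀ i, (s i = j ∧ i ∉ M) ↔ s i = j := fun i =>
    ⟨And.left, fun hi => ⟨hi, fun hm => h i hm hi⟩⟩
  have hload : carrierLoad j s M = carrierLoad j s ∅ := by
    funext i
    induction i with
    | zero => rfl
    | succ i ih => simp [carrierLoad, hball, ih]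
  funext i
  simp [carrierPass, hball, hload]

theorem carrierLoad_succ_congr {s' : ℕ → ℕ} {M' : Set ℕ} {i d : ℕ} (hs : s' i = s i)
    (hM : i ∈ M' ↔ i ∈ M) (hl : carrierLoad j s' M' i + d = carrierLoad j s M i)
    (hd : d = 0 ∨ s i ≠ 1) : carrierLoad j s' M' (i + 1) + d = carrierLoad j s M (i + 1) := by
  simp only [carrierLoad, hs, hM]
  rcases hd with rfl | hne
  · simp only [add_zero] at hl ⊢
    rw [hl]
  · simp only [hne, false_and, if_false]
    split_ifs <;> omega

theorem carrierPass_congr {s' : ℕ → ℕ} {M' : Set ℕ} {i d : ℕ} (hs : s' i = s i)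
    (hM : i ∈ M' ↔ i ∈ M) (hl : carrierLoad j s' M' i + d = carrierLoad j s M i)
    (hd : d = 0 ∨ s i ≠ 1) : carrierPass j s' M' i = carrierPass j s M i := by
  simp only [carrierPass, hs, hM]
  rcases hd with rfl | hne
  · rw [← hl, add_zero]
  · simp [hne]

/-- Moving the leftmost unmoved ball `p` to the first empty box `q` after it removes exactly one
ball from the carrier on `(p, q]`. -/
theorem carrierLoad_moveBall (hj : j ≠ 1) {p q : ℕ} (hp : s p = j ∧ p ∉ M)
    (hp_min : ∀ k < p, s k = j → k ∈ M) (hq : s q = 1) (hpq : p < q)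
    (hq_min : ∀ k, p < k → k < q → s k ≠ 1) (i : ℕ) :
    carrierLoad j (update (update s p 1) q j) (insert q M) i
      + (if p < i ∧ i ≤ q then 1 else 0) = carrierLoad j s M i := by
  set s' := update (update s p 1) q j
  have hs'p : s' p = 1 := by simp [s', hpq.ne]
  have hs'q : s' q = j := by simp [s']
  have hs' : ∀ k, k ≠ p → k ≠ q → s' k = s k := fun k hkp hkq => by simp [s', hkp, hkq]
  have h0 := carrierLoad_eq_zero_of_forall_lt hp_min
  have hM' : ∀ k, k ≠ q → (k ∈ insert q M ↔ k ∈ M) := fun k hk => by simp [hk]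
  induction i with
  | zero => simp [carrierLoad]
  | succ i ih =>
    by_cases hip : i = p
    · subst hip
      have e : carrierLoad j s' (insert q M) i = 0 := by simpa [h0 i le_rfl] using ih
      rw [carrierLoad_succ_of_skip (by simp [hs'p, Ne.symm hj]) (fun _ => e),
        carrierLoad_succ_of_ball hp.1 hp.2, e, h0 i le_rfl]
      simp [hpq]
    by_cases hiq : i = q
    · subst hiq
      have e : carrierLoad j s' (insert i M) i + 1 = carrierLoad j s M i := by
        simpa [hpq] using ih
      have hdrop := carrierLoad_succ_of_drop hj hq (by omega : 0 < carrierLoad j s M i)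
      rw [carrierLoad_succ_of_skip (fun _ => Set.mem_insert i M) (fun h => absurd (hs'q ▸ h) hj),
        if_neg (by omega)]
      omega
    have hind : (p < i + 1 ∧ i + 1 ≤ q) ↔ (p < i ∧ i ≤ q) := by omega
    simp only [hind]
    refine carrierLoad_succ_congr (hs' i hip hiq) (hM' i hiq) ih ?_
    by_cases h : p < i ∧ i ≤ q
    · exact .inr (hq_min i h.1 (by omega))
    · exact .inl (if_neg h)

theorem carrierPass_moveBall (hj : j ≠ 1) {p q : ℕ} (hp : s p = j ∧ p ∉ M)
    (hp_min : ∀ k < p, s k = j → k ∈ M) (hq : s q = 1) (hpq : p < q)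
    (hq_min : ∀ k, p < k → k < q → s k ≠ 1) :
    carrierPass j (update (update s p 1) q j) (insert q M) = carrierPass j s M := by
  funext i
  have hl := carrierLoad_moveBall hj hp hp_min hq hpq hq_min i
  by_cases hip : i = p
  · subst hip
    have hs'i : update (update s i 1) q j i = 1 := by simp [hpq.ne]
    have hl0 : carrierLoad j (update (update s i 1) q j) (insert q M) i = 0 := by
      simpa [carrierLoad_eq_zero_of_forall_lt hp_min i le_rfl] using hl
    rw [carrierPass_of_skip (fun h => absurd (hs'i ▸ h).symm hj) (fun _ => hl0),
      carrierPass_of_ball hp.1 hp.2, hs'i]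
  by_cases hiq : i = q
  · subst hiq
    rw [carrierPass_of_skip (fun _ => Set.mem_insert i M) (fun h => absurd (by simpa using h) hj),
      carrierPass_of_drop hj hq (by rw [if_pos ⟨hpq, le_rfl⟩] at hl; omega)]
    simp
  refine carrierPass_congr (by simp [hip, hiq]) (by simp [hiq]) hl ?_
  by_cases h : p < i ∧ i ≤ q
  · exact .inr (hq_min i h.1 (by omega))
  · exact .inl (if_neg h)

end Carrier

theorem finite_mulSupport_update {α M : Type*} [DecidableEq α] [One M] {f : α → M}
    (hf : (mulSupport f).Finite) (a : α) (b : M) : (mulSupport (update f a b)).Finite :=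
  (hf.insert a).subset fun i hi => by
    by_cases h : i = a
    · simp [h]
    · simpa [h] using hi

/-- Preserved by the phase of label `j`; a phase of a smaller label can then forget the marks. -/
def WellMarked (j : ℕ) (sm : (ℕ → ℕ) × Set ℕ) : Prop :=
  (mulSupport sm.1).Finite ∧ ∀ i ∈ sm.2, j ≤ sm.1 i

section Phase

variable {j : ℕ} {s : ℕ → ℕ} {M : Set ℕ}

theorem bbsMoveBall_eq_update (hfin : (mulSupport s).Finite) (h : ∃ i, s i = j ∧ i ∉ M) :
    ∃ p q, (s p = j ∧ p ∉ M) ∧ (∀ k < p, s k = j → k ∈ M) ∧ s q = 1 ∧ p < q ∧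
      (∀ k, p < k → k < q → s k ≠ 1) ∧
      bbsMoveBall j (s, M) = (update (update s p 1) q j, insert q M) := by
  set p := sInf {i | s i = j ∧ i ∉ M}
  obtain ⟨q', hq's, hpq'⟩ := hfin.infinite_compl.exists_gt p
  have hq' : q' ∈ {i | s i = 1 ∧ p < i} := ⟨by simpa using hq's, hpq'⟩
  set q := sInf {i | s i = 1 ∧ p < i}
  obtain ⟨hq, hpq⟩ : s q = 1 ∧ p < q := Nat.sInf_mem ⟨q', hq'⟩
  refine ⟨p, q, Nat.sInf_mem h, fun k hk hs => ?_, hq, hpq,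
    fun k hpk hkq hs => Nat.notMem_of_lt_sInf hkq ⟨hs, hpk⟩, ?_⟩
  · by_contra hM
    exact Nat.notMem_of_lt_sInf hk ⟨hs, hM⟩
  · rw [bbsMoveBall, dif_pos ⟨h, q', hq'⟩]

theorem wellMarked_bbsMoveBall {sm : (ℕ → ℕ) × Set ℕ} (h : WellMarked j sm) :
    WellMarked j (bbsMoveBall j sm) := by
  obtain ⟨s, M⟩ := sm
  by_cases hb : ∃ i, s i = j ∧ i ∉ M
  · obtain ⟨p, q, hp, -, -, -, -, heq⟩ := bbsMoveBall_eq_update h.1 hb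
    rw [heq]
    refine ⟨finite_mulSupport_update (finite_mulSupport_update h.1 p 1) q j, ?_⟩
    rintro i (rfl | hi)
    · simp
    · by_cases hiq : i = q
      · simp [hiq]
      · simpa [hiq, ne_of_mem_of_not_mem hi hp.2] using h.2 i hi
  · rw [bbsMoveBall, dif_neg fun h => hb h.1]
    exact h

theorem iterate_bbsMoveBall_fst (hj : j ≠ 1) (N : ℕ) :
    ∀ {s M}, (mulSupport s).Finite → {i | s i = j ∧ i ∉ M}.ncard = N →
      ((bbsMoveBall j)^[N] (s, M)).1 = carrierPass j s M := by
  induction N with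
  | zero =>
    intro s M hfin hN
    have hU : {i | s i = j ∧ i ∉ M}.Finite := hfin.subset fun i hi => by
      simpa only [mem_mulSupport, hi.1] using hj
    have hU0 := (Set.ncard_eq_zero hU).1 hN
    refine (carrierPass_eq_self fun k hk => ?_).symm
    by_contra hM
    exact (Set.eq_empty_iff_forall_notMem.1 hU0 k ⟨hk, hM⟩)
  | succ N ih =>
    intro s M hfin hN
    have hU : {i | s i = j ∧ i ∉ M}.Nonempty := Set.nonempty_of_ncard_ne_zero (by omega)
    obtain ⟨p, q, hp, hp_min, hq, hpq, hq_min, heq⟩ := bbsMoveBall_eq_update hfin hU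
    have hfin' := finite_mulSupport_update (finite_mulSupport_update hfin p 1) q j
    have hU' : {i | update (update s p 1) q j i = j ∧ i ∉ insert q M} =
        {i | s i = j ∧ i ∉ M} \ {p} := by
      ext i
      by_cases hiq : i = q
      · simp [hiq, hpq.ne', hq, Ne.symm hj]
      · by_cases hip : i = p
        · simp [hip, hpq.ne, Ne.symm hj]
        · simp [hip, hiq]
    have hN' : {i | update (update s p 1) q j i = j ∧ i ∉ insert q M}.ncard = N := by
      rw [hU', Set.ncard_sdiff_singleton_of_mem (show p ∈ {i | s i = j ∧ i ∉ M} from hp), hN]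
      rfl
    rw [iterate_succ_apply, heq, ih hfin' hN', carrierPass_moveBall hj hp hp_min hq hpq hq_min]

theorem bbsPhase_fst (hj : j ≠ 1) (hfin : (mulSupport s).Finite) :
    (bbsPhase j (s, M)).1 = carrierPass j s M :=
  iterate_bbsMoveBall_fst hj _ hfin rfl

theorem wellMarked_bbsPhase {sm : (ℕ → ℕ) × Set ℕ} (h : WellMarked j sm) :
    WellMarked j (bbsPhase j sm) :=
  Iterate.rec (WellMarked j) h (fun _ => wellMarked_bbsMoveBall) _

end Phase

noncomputable def carrierChain : ℕ → (ℕ → ℕ) → ℕ → ℕ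
  | 0, u => u
  | J + 1, u => carrierChain J (carrierPass (J + 2) u ∅)

theorem foldl_bbsPhase (n : ℕ) : ∀ {sm : (ℕ → ℕ) × Set ℕ}, (mulSupport sm.1).Finite →
    (∀ i ∈ sm.2, n + 1 < sm.1 i) →
      ((List.range n).foldl (fun sm k => bbsPhase (n + 1 - k) sm) sm).1 = carrierChain n sm.1 ∧
      (mulSupport ((List.range n).foldl (fun sm k => bbsPhase (n + 1 - k) sm) sm).1).Finite := by
  induction n with
  | zero => exact fun hfin _ => ⟨rfl, hfin⟩
  | succ n ih =>
    intro sm hfin hM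
    have hj : n + 2 ≠ 1 := by omega
    obtain ⟨hfin', hM'⟩ := wellMarked_bbsPhase ⟨hfin, fun i hi => (hM i hi).le⟩
    have hpass : (bbsPhase (n + 2) sm).1 = carrierPass (n + 2) sm.1 ∅ := by
      rw [bbsPhase_fst hj hfin, carrierPass_eq_of_forall_mem_ne fun i hi => (hM i hi).ne']
    rw [List.range_succ_eq_map, List.foldl_cons, List.foldl_map]
    simp only [Nat.succ_eq_add_one, Nat.add_sub_add_right, Nat.sub_zero]
    rw [carrierChain, ← hpass]
    exact ih hfin' hM'

/-- `chainLoad J u i k` is the load of label `k` on arrival at box `i` in `carrierChain J u`. -/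
noncomputable def chainLoad : ℕ → (ℕ → ℕ) → ℕ → ℕ → ℕ
  | 0, _, _ => 0
  | J + 1, u, i =>
    update (chainLoad J (carrierPass (J + 2) u ∅) i) (J + 2) (carrierLoad (J + 2) u ∅ i)

def IsMaxLoadedBelow (c : ℕ → ℕ) (b y : ℕ) : Prop :=
  (y = 1 ∨ 2 ≤ y ∧ y < b ∧ 0 < c y) ∧ ∀ k, 2 ≤ k → k < b → 0 < c k → k ≤ y

namespace IsMaxLoadedBelow

variable {c : ℕ → ℕ} {a b y : ℕ}

theorem update_of_le (h : IsMaxLoadedBelow c b y) (hb : b ≤ a) (t : ℕ) :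
    IsMaxLoadedBelow (update c a t) b y := by
  have hmax : ∀ k, 2 ≤ k → k < b → 0 < update c a t k → k ≤ y := fun k hk hkb hck =>
    h.2 k hk hkb (by rwa [update_of_ne (by omega)] at hck)
  obtain ⟨hy | ⟨hy2, hyb, hcy⟩, -⟩ := h
  · exact ⟨.inl hy, hmax⟩
  · exact ⟨.inr ⟨hy2, hyb, by rwa [update_of_ne (by omega)]⟩, hmax⟩

theorem update_zero_succ (h : IsMaxLoadedBelow c a y) :
    IsMaxLoadedBelow (update c a 0) (a + 1) y := by
  obtain ⟨hy, hmax⟩ := h.update_of_le le_rfl 0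
  refine ⟨hy.imp_right fun ⟨hy2, hya, hcy⟩ => ⟨hy2, by omega, hcy⟩,
    fun k hk hka hck => ?_⟩
  rcases (Nat.lt_succ_iff_lt_or_eq.1 hka) with hka | rfl
  · exact hmax k hk hka hck
  · simp at hck

theorem one_le_and_lt_max (h : IsMaxLoadedBelow c b y) : 1 ≤ y ∧ y < max b 2 := by
  obtain ⟨hy | ⟨hy2, hyb, -⟩, -⟩ := h <;> omega

theorem eq_one_of_forall_eq_zero (h : IsMaxLoadedBelow c b y) (hc : ∀ k, 2 ≤ k → c k = 0) :
    y = 1 := by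
  obtain ⟨hy | ⟨hy2, -, hcy⟩, -⟩ := h
  · exact hy
  · exact absurd (hc y hy2) hcy.ne'

end IsMaxLoadedBelow

theorem carrierChain_of_lt (J : ℕ) (u : ℕ → ℕ) (i : ℕ) (hui : J + 1 < u i) :
    carrierChain J u i = u i ∧ chainLoad J u (i + 1) = chainLoad J u i := by
  induction J generalizing u with
  | zero => exact ⟨rfl, rfl⟩
  | succ J ih =>
    have hb : carrierPass (J + 2) u ∅ i = u i :=
      carrierPass_of_skip (fun h => by omega) (fun h => by omega)
    obtain ⟨hout, hload⟩ := ih (carrierPass (J + 2) u ∅) (by rw [hb]; omega)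
    refine ⟨hout.trans hb, ?_⟩
    rw [chainLoad, chainLoad, hload,
      carrierLoad_succ_of_skip (fun h => by omega) (fun h => by omega)]

/-- One step of a carrier holding labels `2, …, J + 1`: with loads `c` it reads the letter `x`,
emits `y` and moves on with loads `c'`. -/
def IsCarrierStep (J : ℕ) (c c' : ℕ → ℕ) (x y : ℕ) : Prop :=
  IsMaxLoadedBelow c (if x = 1 then J + 2 else x) y ∧
    ∀ k, 2 ≤ k → c' k + (if k = y then 1 else 0) = c k + (if k = x then 1 else 0)

namespace IsCarrierStep

theorem drop_top (J : ℕ) (c : ℕ → ℕ) (t : ℕ) :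
    IsCarrierStep (J + 1) (update c (J + 2) (t + 1)) (update c (J + 2) t) 1 (J + 2) := by
  refine ⟨⟨.inr ⟨by omega, by simp, by simp⟩, fun k _ hk _ => by rw [if_pos rfl] at hk; omega⟩,
    fun k hk => ?_⟩
  by_cases hkJ : k = J + 2
  · simp [hkJ]
  · rw [update_of_ne hkJ, update_of_ne hkJ, if_neg hkJ, if_neg (by omega)]

theorem update_top {J : ℕ} {c c' : ℕ → ℕ} {v y : ℕ} (h : IsCarrierStep J c c' v y)
    (hv : 1 ≤ v ∧ v ≤ J + 1) {x t t' : ℕ} (hxv : v = if x = J + 2 then 1 else x)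
    (ht' : t' = t + if x = J + 2 then 1 else 0) (ht : x = 1 → t = 0) :
    IsCarrierStep (J + 1) (update c (J + 2) t) (update c' (J + 2) t') x y := by
  obtain ⟨hmax, hrel⟩ := h
  have hy : y ≠ J + 2 := by
    have := hmax.one_le_and_lt_max
    split_ifs at this <;> omega
  refine ⟨?_, fun k hk => ?_⟩
  · by_cases hx1 : x = 1
    · rw [if_pos (by simpa [hx1] using hxv)] at hmax
      rw [if_pos hx1, ht hx1]
      exact hmax.update_zero_succ
    · have hb : (if v = 1 then J + 2 else v) = x := by
        rw [hxv]; split_ifs <;> omega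
      rw [hb] at hmax
      rw [if_neg hx1]
      exact hmax.update_of_le (by split_ifs at hxv <;> omega) _
  · by_cases hkJ : k = J + 2
    · subst hkJ
      simp only [update_self, ht', if_neg (Ne.symm hy)]
      split_ifs <;> omega
    · simp only [update_of_ne hkJ]
      rw [hrel k hk, hxv]
      split_ifs <;> omega

theorem initial (J : ℕ) : IsCarrierStep J 0 0 1 1 :=
  ⟨⟨.inl rfl, fun k _ _ h => by simp at h⟩, fun _ _ => rfl⟩

theorem ascent_add {J : ℕ} {c c' c'' : ℕ → ℕ} {x x' y y' : ℕ}
    (h₁ : IsCarrierStep J c c' x x') (h₂ : IsCarrierStep J c' c'' y y')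
    (hx : 1 ≤ x ∧ x ≤ J + 1) (hy : 1 ≤ y ∧ y ≤ J + 1) :
    (if x' < y' then 1 else 0) + (if 2 ≤ y then 1 else 0) =
      (if x < y then 1 else 0) + (if 2 ≤ x then 1 else 0) := by
  obtain ⟨⟨hx', hxmax⟩, hrel⟩ := h₁
  obtain ⟨⟨hy', hymax⟩, -⟩ := h₂
  have hclear : ∀ k, 2 ≤ k → x' < k → k < (if x = 1 then J + 2 else x) → k ≠ x →
      c' k = 0 := by
    intro k hk hxk hkb hkx
    -- reading `x` loads an `x` and unloads the largest label below the bound for `x`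
    have hck : c k = 0 := Nat.eq_zero_of_not_pos fun hc => (hxmax k hk hkb hc).not_gt hxk
    simpa [hkx, hxk.ne', hck] using hrel k hk
  have key : x' < y' ↔ 2 ≤ x ∧ (y = 1 ∨ x < y) := by
    constructor
    · intro hlt
      obtain ⟨hy'2, hy'b, hcy'⟩ :
          2 ≤ y' ∧ y' < (if y = 1 then J + 2 else y) ∧ 0 < c' y' := by
        rcases hy' with h | h <;> [omega; exact h]
      by_contra hn
      refine hcy'.ne' (hclear y' hy'2 hlt ?_ ?_) <;> split_ifs at hy'b ⊢ <;> omega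
    · rintro ⟨hx2, hyx⟩
      have hx'x : x' < x := by
        rcases hx' with h | h
        · omega
        · simpa [show x ≠ 1 by omega] using h.2.1
      have hcx : 0 < c' x := by
        have := hrel x hx2
        simp only [hx'x.ne', if_true, if_false] at this
        omega
      have := hymax x hx2 (by split_ifs <;> omega) hcx
      split_ifs at hx' <;> omega
  split_ifs <;> omega

end IsCarrierStep

theorem carrierChain_spec (J : ℕ) (u : ℕ → ℕ) (i : ℕ) (h1 : 1 ≤ u i) (h2 : u i ≤ J + 1) :
    IsCarrierStep J (chainLoad J u i) (chainLoad J u (i + 1)) (u i) (carrierChain J u i) := by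
  induction J generalizing u with
  | zero =>
    have hu : u i = 1 := by omega
    exact ⟨⟨.inl hu, fun k _ _ h => by simp [chainLoad] at h⟩,
      fun k _ => by simp [chainLoad, carrierChain, hu]⟩
  | succ J ih =>
    set v := carrierPass (J + 2) u ∅
    set L := carrierLoad (J + 2) u ∅
    have hc : ∀ i, chainLoad (J + 1) u i = update (chainLoad J v i) (J + 2) (L i) := fun _ => rfl
    rw [hc, hc, show carrierChain (J + 1) u i = carrierChain J v i from rfl]
    by_cases hdrop : u i = 1 ∧ 0 < L i
    · have hv : v i = J + 2 := carrierPass_of_drop (by omega) hdrop.1 hdrop.2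
      have hL : L (i + 1) + 1 = L i := carrierLoad_succ_of_drop (by omega) hdrop.1 hdrop.2
      obtain ⟨hvo, hvl⟩ := carrierChain_of_lt J v i (by omega)
      rw [hvo, hv, hvl, hdrop.1, ← hL]
      exact IsCarrierStep.drop_top J _ _
    · have hskip : u i = 1 → L i = 0 := fun h => by by_contra; exact hdrop ⟨h, by omega⟩
      have hv : v i = if u i = J + 2 then 1 else u i := by
        split_ifs with hJ
        · exact carrierPass_of_ball hJ (Set.notMem_empty i)
        · exact carrierPass_of_skip (fun h => absurd h hJ) hskip
      have hL : L (i + 1) = L i + if u i = J + 2 then 1 else 0 := by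
        split_ifs with hJ
        · exact carrierLoad_succ_of_ball hJ (Set.notMem_empty i)
        · exact carrierLoad_succ_of_skip (fun h => absurd h hJ) hskip
      have hvb : 1 ≤ v i ∧ v i ≤ J + 1 := by rw [hv]; split_ifs <;> omega
      exact (ih v hvb.1 hvb.2).update_top hvb hv hL hskip

theorem chainLoad_zero (J : ℕ) (u : ℕ → ℕ) : chainLoad J u 0 = 0 := by
  induction J generalizing u with
  | zero => rfl
  | succ J ih => simp [chainLoad, ih, carrierLoad]

theorem chainLoad_eq_zero_of_forall_lt {J p : ℕ} {u : ℕ → ℕ} (hu : ∀ k < p, u k = 1) :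
    ∀ i ≤ p, ∀ k, 2 ≤ k → chainLoad J u i k = 0
  | 0, _, k, _ => by simp [chainLoad_zero]
  | i + 1, hi, k, hk => by
    have hrel := (carrierChain_spec J u i (by simp [hu i hi]) (by simp [hu i hi])).2 k hk
    rw [chainLoad_eq_zero_of_forall_lt hu i (by omega) k hk, hu i hi] at hrel
    simp only [zero_add, if_neg (show k ≠ 1 by omega)] at hrel
    omega

theorem carrierChain_eq_one_of_forall_lt {J p : ℕ} {u : ℕ → ℕ} (hu : ∀ k < p, u k = 1)
    (hp : 1 ≤ u p ∧ u p ≤ J + 1) : ∀ i ≤ p, carrierChain J u i = 1 := by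
  intro i hi
  have hui : 1 ≤ u i ∧ u i ≤ J + 1 := by
    rcases hi.lt_or_eq with hi | rfl
    · simp [hu i hi]
    · exact hp
  exact (carrierChain_spec J u i hui.1 hui.2).1.eq_one_of_forall_eq_zero
    (chainLoad_eq_zero_of_forall_lt hu i hi)

def prependEmpty (u : ℕ → ℕ) : ℕ → ℕ
  | 0 => 1
  | i + 1 => u i

@[simp] theorem prependEmpty_zero (u : ℕ → ℕ) : prependEmpty u 0 = 1 := rfl

@[simp] theorem prependEmpty_succ (u : ℕ → ℕ) (i : ℕ) : prependEmpty u (i + 1) = u i := rfl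

def ascent (u : ℕ → ℕ) (i : ℕ) : ℕ :=
  if prependEmpty u i < u i then 1 else 0

theorem ascent_carrierChain_zero {J : ℕ} {u : ℕ → ℕ}
    (hu : ∀ i, 1 ≤ u i ∧ u i ≤ J + 1) :
    ascent (carrierChain J u) 0 + (if 2 ≤ u 0 then 1 else 0) = ascent u 0 :=
  (IsCarrierStep.initial J).ascent_add
    (chainLoad_zero J u ▸ carrierChain_spec J u 0 (hu 0).1 (hu 0).2) ⟨le_rfl, by omega⟩ (hu 0)

theorem ascent_carrierChain_succ {J : ℕ} {u : ℕ → ℕ}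
    (hu : ∀ i, 1 ≤ u i ∧ u i ≤ J + 1) (m : ℕ) :
    ascent (carrierChain J u) (m + 1) + (if 2 ≤ u (m + 1) then 1 else 0) =
      ascent u (m + 1) + (if 2 ≤ u m then 1 else 0) :=
  (carrierChain_spec J u m (hu m).1 (hu m).2).ascent_add
    (carrierChain_spec J u (m + 1) (hu (m + 1)).1 (hu (m + 1)).2) (hu m) (hu (m + 1))

def IsState (n : ℕ) (u : ℕ → ℕ) : Prop :=
  (∀ i, 1 ≤ u i ∧ u i ≤ n + 1) ∧ (mulSupport u).Finite

section Evolution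

variable {n : ℕ} {u : ℕ → ℕ}

theorem bbsT_eq_carrierChain (hu : (mulSupport u).Finite) : bbsT n u = carrierChain n u :=
  (foldl_bbsPhase n (sm := (u, ∅)) hu (by simp)).1

theorem isState_bbsT (h : IsState n u) : IsState n (bbsT n u) := by
  refine ⟨fun i => ?_, (foldl_bbsPhase n (sm := (u, ∅)) h.2 (by simp)).2⟩
  rw [bbsT_eq_carrierChain h.2]
  have hy := (carrierChain_spec n u i (h.1 i).1 (h.1 i).2).1.one_le_and_lt_max
  have hx := h.1 i
  split_ifs at hy <;> omega

theorem isState_iterate_bbsT (h : IsState n u) (k : ℕ) : IsState n ((bbsT n)^[k] u) :=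
  Iterate.rec _ h (fun _ => isState_bbsT) k

theorem iterate_bbsT_eq_one (h : IsState n u) : ∀ K, ∀ i < K, (bbsT n)^[K] u i = 1
  | 0 => by simp
  | K + 1 => by
    intro i hi
    have hK := isState_iterate_bbsT h K
    rw [iterate_succ_apply', bbsT_eq_carrierChain hK.2]
    exact carrierChain_eq_one_of_forall_lt (iterate_bbsT_eq_one h K) (hK.1 K) i (by omega)

end Evolution

def ascentCount (u : ℕ → ℕ) (m : ℕ) : ℕ :=
  ∑ i ∈ Finset.range m, ascent u i

section Ascents

variable {n : ℕ} {u : ℕ → ℕ}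

theorem ascentCount_bbsT (h : IsState n u) (m : ℕ) :
    ascentCount u (m + 1) = ascentCount (bbsT n u) (m + 1) + (if 2 ≤ u m then 1 else 0) := by
  rw [bbsT_eq_carrierChain h.2]
  induction m with
  | zero =>
    have := ascent_carrierChain_zero h.1
    simp only [ascentCount, zero_add, Finset.sum_range_one]
    omega
  | succ m ih =>
    have := ascent_carrierChain_succ h.1 m
    simp only [ascentCount, Finset.sum_range_succ _ (m + 1)] at ih ⊢
    omega

theorem ascentCount_iterate_bbsT (h : IsState n u) (m K : ℕ) :
    ascentCount u (m + 1) = ascentCount ((bbsT n)^[K] u) (m + 1) +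
      ∑ k ∈ Finset.range K, if 2 ≤ (bbsT n)^[k] u m then 1 else 0 := by
  induction K with
  | zero => simp
  | succ K ih =>
    rw [ih, ascentCount_bbsT (isState_iterate_bbsT h K) m, iterate_succ_apply',
      Finset.sum_range_succ]
    omega

theorem ascentCount_eq_zero {m : ℕ} (hu : ∀ i ≤ m, u i = 1) : ascentCount u (m + 1) = 0 := by
  refine Finset.sum_eq_zero fun i hi => if_neg ?_
  have hi := Finset.mem_range.1 hi
  rw [hu i (by omega)]
  cases i with
  | zero => simp
  | succ i => simp [hu i (by omega)]

theorem ascentCount_eq_sum_balls (h : IsState n u) {m K : ℕ} (hmK : m < K) :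
    ascentCount u (m + 1) = ∑ k ∈ Finset.range K, if 2 ≤ (bbsT n)^[k] u m then 1 else 0 := by
  rw [ascentCount_iterate_bbsT h m K,
    ascentCount_eq_zero fun i hi => iterate_bbsT_eq_one h K i (by omega), zero_add]

end Ascents

theorem sum_range_sub_mul (f : ℕ → ℕ) (L : ℕ) :
    ∑ i ∈ Finset.range L, (L - i) * f i =
      ∑ m ∈ Finset.range L, ∑ i ∈ Finset.range (m + 1), f i := by
  have := Finset.sum_Ico_Ico_comm 0 L fun i _ => f i
  simpa only [← Finset.range_eq_Ico, Finset.sum_const, Nat.card_Ico, smul_eq_mul] using this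

theorem bbsTau_eq_sum (a : List ℕ) :
    bbsTau a =
      ∑ i ∈ Finset.range a.length, (a.length - i) * ascent (fun i => a.getD i 1) i := by
  cases a with
  | nil => simp [bbsTau]
  | cons x t =>
    have hget : ∀ i < t.length + 1, (x :: t).getD i 0 = (x :: t).getD i 1 := fun i hi => by
      rw [List.getD_eq_getElem _ _ hi, List.getD_eq_getElem _ _ hi]
    rw [bbsTau, List.length_cons, Nat.add_sub_cancel, ← Finset.Ico_add_one_right_eq_Icc,
      Finset.sum_Ico_eq_sum_range, Finset.sum_range_succ', add_comm]
    congr 1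
    refine Finset.sum_congr rfl fun k hk => ?_
    have hk := Finset.mem_range.1 hk
    rw [add_comm 1 k, Nat.add_sub_cancel, hget k (by omega), hget (k + 1) (by omega)]
    rfl

theorem isState_getD {n : ℕ} {a : List ℕ} (ha : ∀ x ∈ a, 1 ≤ x ∧ x ≤ n + 1) :
    IsState n (fun i => a.getD i 1) := by
  have hout : ∀ i, a.length ≤ i → a.getD i 1 = 1 := fun i hi => List.getD_eq_default _ _ hi
  refine ⟨fun i => ?_, (Set.finite_Iio a.length).subset fun i hi => ?_⟩
  · dsimp only
    rcases lt_or_ge i a.length with hi | hi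
    · rw [List.getD_eq_getElem _ _ hi]
      exact ha _ (List.getElem_mem hi)
    · rw [hout i hi]
      omega
  · by_contra hi'
    exact hi (hout i (not_lt.1 hi'))

end BoxBall

open BoxBall in
theorem tau_eq_number_of_balls_general
    (n : ℕ) (a : List ℕ) (ha : ∀ x ∈ a, 1 ≤ x ∧ x ≤ n + 1) :
    bbsTau a =
      ∑ k ∈ Finset.range a.length,
        ((Finset.range a.length).filter
          (fun i => 2 ≤ (bbsT n)^[k] (fun i => a.getD i 1) i)).card := by
  have hu := isState_getD ha
  calc bbsTau a = ∑ m ∈ Finset.range a.length, ascentCount (fun i => a.getD i 1) (m + 1) := by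
        rw [bbsTau_eq_sum, sum_range_sub_mul]; rfl
    _ = ∑ m ∈ Finset.range a.length, ∑ k ∈ Finset.range a.length,
          if 2 ≤ (bbsT n)^[k] (fun i => a.getD i 1) m then 1 else 0 :=
        Finset.sum_congr rfl fun m hm => ascentCount_eq_sum_balls hu (Finset.mem_range.1 hm)
    _ = _ := by
        rw [Finset.sum_comm]
        simp only [Finset.card_filter]

theorem tau_eq_number_of_balls
    (n : ℕ) (hn : 1 ≤ n) (a : List ℕ) (ha : ∀ x ∈ a, 1 ≤ x ∧ x ≤ n + 1) :
    bbsTau a =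
      ∑ k ∈ Finset.range a.length,
        ((Finset.range a.length).filter
          (fun i => 2 ≤ (bbsT n)^[k] (fun i => a.getD i 1) i)).card :=
  tau_eq_number_of_balls_general n a ha
end
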